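/- arXiv:0809.1235 — 6 statements merged into one kernel-verified Lean document; each statement's English description precedes it below -/
import Mathlib

section
/- Let X be a topological space, E a Hausdorff topological abelian group, f : X → X a map, and c : X → E any function. Let p ∈ X be a fixed point of f. Suppose ξ₁, ξ₂ : X → E are continuous functions both solving the same commutative cohomology equation, i.e. ξᵢ(f x) − ξᵢ(x) = c(x) for all x ∈ X and i = 1,2, and suppose ξ₁(p) = ξ₂(p). Then for every x ∈ X such that the sequence f^[n](x) converges to p as n → ∞, one has ξ₁(x) = ξ₂(x). -/
open Filter Topology

theorem apply_eq_of_comp_eq_of_tendsto_iterate {X Y : Type*} [TopologicalSpace X]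
    [TopologicalSpace Y] [T2Space Y] {f : X → X} {g : X → Y} {p x : X} (hg : g ∘ f = g)
    (hgp : ContinuousAt g p) (hx : Tendsto (fun n => f^[n] x) atTop (𝓝 p)) : g x = g p :=
  tendsto_nhds_unique
    (tendsto_const_nhds.congr fun n => (congrFun (Function.iterate_invariant hg n) x).symm)
    (hgp.tendsto.comp hx)

theorem sub_comp_eq_sub_of_sub_comp_eq {X G : Type*} [AddCommGroup G] {f : X → X}
    {c ξ₁ ξ₂ : X → G} (he₁ : ∀ x, ξ₁ (f x) - ξ₁ x = c x) (he₂ : ∀ x, ξ₂ (f x) - ξ₂ x = c x) :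
    (ξ₁ - ξ₂) ∘ f = ξ₁ - ξ₂ :=
  funext fun x => sub_eq_sub_iff_sub_eq_sub.mp ((he₁ x).trans (he₂ x).symm)

theorem stmt_4_general {X E : Type*} [TopologicalSpace X]
    [AddCommGroup E] [TopologicalSpace E] [T2Space E] [IsTopologicalAddGroup E]
    (f : X → X) (c : X → E) (p : X)
    (ξ₁ ξ₂ : X → E) (hc₁ : Continuous ξ₁) (hc₂ : Continuous ξ₂)
    (he₁ : ∀ x, ξ₁ (f x) - ξ₁ x = c x) (he₂ : ∀ x, ξ₂ (f x) - ξ₂ x = c x)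
    (hpeq : ξ₁ p = ξ₂ p) :
    ∀ x, Filter.Tendsto (fun n => f^[n] x) Filter.atTop (nhds p) → ξ₁ x = ξ₂ x := by
  intro x hx
  have hdiff : (ξ₁ - ξ₂) x = (ξ₁ - ξ₂) p :=
    apply_eq_of_comp_eq_of_tendsto_iterate (sub_comp_eq_sub_of_sub_comp_eq he₁ he₂)
      (hc₁.sub hc₂).continuousAt hx
  rwa [Pi.sub_apply, Pi.sub_apply, hpeq, sub_self, sub_eq_zero] at hdiff

/-- Uniqueness of continuous solutions of a commutative cohomology equation on the stable
set of a fixed point: two continuous solutions agreeing at the fixed point agree at every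
point whose forward orbit converges to the fixed point. -/
theorem stmt_4 {X E : Type*} [TopologicalSpace X]
    [AddCommGroup E] [TopologicalSpace E] [T2Space E] [IsTopologicalAddGroup E]
    (f : X → X) (c : X → E) (p : X) (hp : f p = p)
    (ξ₁ ξ₂ : X → E) (hc₁ : Continuous ξ₁) (hc₂ : Continuous ξ₂)
    (he₁ : ∀ x, ξ₁ (f x) - ξ₁ x = c x) (he₂ : ∀ x, ξ₂ (f x) - ξ₂ x = c x)
    (hpeq : ξ₁ p = ξ₂ p) :
    ∀ x, Filter.Tendsto (fun n => f^[n] x) Filter.atTop (nhds p) → ξ₁ x = ξ₂ x :=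
  stmt_4_general f c p ξ₁ ξ₂ hc₁ hc₂ he₁ he₂ hpeq
end

section
/- Let A be a unital Banach algebra over ℝ, U ⊆ ℝ^d open, and n ≥ 1. Let η₀, …, η_{n−1} : U → A and φ₀, …, φ_n : U → A be maps such that: (i) each φ_i(u) is invertible in A for all u ∈ U; (ii) φ_{i+1}(u) = η_i(u) * φ_i(u) for all u ∈ U and 0 ≤ i ≤ n−1; (iii) φ_n = φ₀ as functions on U (periodicity); (iv) each η_i and each φ_i is Fréchet differentiable on U, with Dη_i(u) : ℝ^d → A the derivative of η_i at u. Then for all u ∈ U and all v ∈ ℝ^d: Σ_{i=0}^{n−1} φ_{i+1}(u)⁻¹ * (Dη_i(u) v) * φ_i(u) = 0. -/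
/-!
Write `g_i = φ_i(u)⁻¹ (Dφ_i(u) v)`. Differentiating `φ_{i+1} = η_i φ_i` by the product rule and
multiplying on the left by `φ_{i+1}(u)⁻¹` (using `φ_{i+1}(u)⁻¹ η_i(u) = φ_i(u)⁻¹`) gives
`φ_{i+1}(u)⁻¹ (Dη_i(u) v) φ_i(u) = g_{i+1} - g_i`. The sum therefore telescopes to `g_n - g_0`,
which vanishes because `φ_n` and `φ_0` agree on a neighbourhood of `u`.
-/

open Filter Topology

theorem inverse_mul_mul_eq_sub {R : Type*} [Ring R] {a b e e' da db : R}
    (ha : IsUnit a) (hb : IsUnit b) (hba : b = e * a) (hdb : db = e * da + e' * a) :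
    Ring.inverse b * e' * a = Ring.inverse b * db - Ring.inverse a * da := by
  have hinv : Ring.inverse b * e = Ring.inverse a := by
    have he : e = b * Ring.inverse a := by
      rw [hba, mul_assoc, Ring.mul_inverse_cancel _ ha, mul_one]
    rw [he, ← mul_assoc, Ring.inverse_mul_cancel _ hb, one_mul]
  rw [hdb, mul_add, ← mul_assoc, hinv, mul_assoc, add_sub_cancel_left]

theorem fderiv_apply_of_eventuallyEq_mul {𝕜 E A : Type*} [NontriviallyNormedField 𝕜]
    [NormedAddCommGroup E] [NormedSpace 𝕜 E] [NormedRing A] [NormedAlgebra 𝕜 A]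
    {ψ η φ : E → A} {u : E} {Dη Dφ : E →L[𝕜] A}
    (h : ψ =ᶠ[𝓝 u] fun y => η y * φ y) (hη : HasFDerivAt η Dη u) (hφ : HasFDerivAt φ Dφ u)
    (v : E) :
    fderiv 𝕜 ψ u v = η u * Dφ v + Dη v * φ u := by
  rw [((hη.mul' hφ).congr_of_eventuallyEq h).fderiv]
  simp

theorem stmt_6_general {A : Type*} [NormedRing A] [NormedAlgebra ℝ A]
    {d : ℕ} (U : Set (EuclideanSpace ℝ (Fin d))) (hU : IsOpen U)
    (n : ℕ)
    (η φ : ℕ → EuclideanSpace ℝ (Fin d) → A)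
    (Dη : ℕ → EuclideanSpace ℝ (Fin d) → EuclideanSpace ℝ (Fin d) →L[ℝ] A)
    (hunit : ∀ i ≤ n, ∀ u ∈ U, IsUnit (φ i u))
    (hcoh : ∀ u ∈ U, ∀ i < n, φ (i + 1) u = η i u * φ i u)
    (hper : ∀ u ∈ U, φ n u = φ 0 u)
    (hdη : ∀ i < n, ∀ u ∈ U, HasFDerivAt (η i) (Dη i u) u)
    (hdφ : ∀ i ≤ n, ∀ u ∈ U, DifferentiableAt ℝ (φ i) u) :
    ∀ u ∈ U, ∀ v : EuclideanSpace ℝ (Fin d),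
      ∑ i ∈ Finset.range n, Ring.inverse (φ (i + 1) u) * (Dη i u v) * φ i u = 0 := by
  intro u hu v
  set g : ℕ → A := fun i => Ring.inverse (φ i u) * fderiv ℝ (φ i) u v
  have hstep : ∀ i ∈ Finset.range n,
      Ring.inverse (φ (i + 1) u) * Dη i u v * φ i u = g (i + 1) - g i := by
    intro i hi
    rw [Finset.mem_range] at hi
    have hcoh_near : φ (i + 1) =ᶠ[𝓝 u] fun y => η i y * φ i y :=
      eventually_of_mem (hU.mem_nhds hu) fun y hy => hcoh y hy i hi
    exact inverse_mul_mul_eq_sub (hunit i hi.le u hu) (hunit (i + 1) hi u hu) (hcoh u hu i hi)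
      (fderiv_apply_of_eventuallyEq_mul hcoh_near (hdη i hi u hu) (hdφ i hi.le u hu).hasFDerivAt v)
  have hperiod : g n = g 0 := by
    have hper_near : φ n =ᶠ[𝓝 u] φ 0 := eventually_of_mem (hU.mem_nhds hu) hper
    simp only [g, hper_near.eq_of_nhds, hper_near.fderiv_eq]
  rw [Finset.sum_congr rfl hstep, Finset.sum_range_sub, hperiod, sub_self]

/-- Differentiating the periodic orbit obstruction: if `φ_{i+1} = η_i * φ_i` on `U`,
`φ_n = φ_0`, each `φ_i(u)` is invertible and all maps are differentiable on `U`, then the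
periodic orbit obstruction of the derived commutative cohomology equation vanishes:
`Σ_{i<n} φ_{i+1}(u)⁻¹ (Dη_i(u) v) φ_i(u) = 0`. -/
theorem stmt_6 {A : Type*} [NormedRing A] [NormedAlgebra ℝ A] [CompleteSpace A]
    {d : ℕ} (U : Set (EuclideanSpace ℝ (Fin d))) (hU : IsOpen U)
    (n : ℕ) (hn : 1 ≤ n)
    (η φ : ℕ → EuclideanSpace ℝ (Fin d) → A)
    (Dη : ℕ → EuclideanSpace ℝ (Fin d) → EuclideanSpace ℝ (Fin d) →L[ℝ] A)
    (hunit : ∀ i ≤ n, ∀ u ∈ U, IsUnit (φ i u))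
    (hcoh : ∀ u ∈ U, ∀ i < n, φ (i + 1) u = η i u * φ i u)
    (hper : ∀ u ∈ U, φ n u = φ 0 u)
    (hdη : ∀ i < n, ∀ u ∈ U, HasFDerivAt (η i) (Dη i u) u)
    (hdφ : ∀ i ≤ n, ∀ u ∈ U, DifferentiableAt ℝ (φ i) u) :
    ∀ u ∈ U, ∀ v : EuclideanSpace ℝ (Fin d),
      ∑ i ∈ Finset.range n, Ring.inverse (φ (i + 1) u) * (Dη i u v) * φ i u = 0 :=
  stmt_6_general U hU n η φ Dη hunit hcoh hper hdη hdφ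
end

section
/- Let X be a metric space, U ⊆ ℝ^d an open convex set, and E a Banach space. Let g : X → U → E and h : X → U → (ℝ^d →L E) (continuous linear maps) satisfy: (i) for every u ∈ U, the map x ↦ g(x)(u) is continuous on X; (ii) the map (x,u) ↦ h(x)(u) is continuous on X × U; (iii) there is a dense subset D ⊆ X such that for every x ∈ D and every u ∈ U, the map w ↦ g(x)(w) is Fréchet differentiable at u with derivative h(x)(u). Then for every x ∈ X and every u ∈ U, the map w ↦ g(x)(w) is Fréchet differentiable at u with derivative h(x)(u). -/
/-!
The derivatives `h y` converge to `h x` uniformly near `u` as `y → x`, by joint continuity of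
`h` at `(x, u)`, and `g y → g x` pointwise by continuity in the base point. Approaching `x`
through the dense set `D`, where `h y` is the derivative of `g y`, the theorem on uniform limits
of derivatives shows that `h x u` is the derivative of `g x` at `u`.
-/

open Filter Topology

theorem ContinuousAt.tendstoUniformlyOnFilter_curry {ι α β : Type*} [TopologicalSpace ι]
    [TopologicalSpace α] [UniformSpace β] {F : ι × α → β} {x : ι} {u : α}
    (hF : ContinuousAt F (x, u)) :
    TendstoUniformlyOnFilter (Function.curry F) (Function.curry F x) (𝓝 x) (𝓝 u) := by
  rw [tendstoUniformlyOnFilter_iff_tendsto, ← nhds_prod_eq]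
  refine Tendsto.mono_right ?_ (nhds_le_uniformity (F (x, u)))
  have hslice : Tendsto (fun q : ι × α => F (x, q.2)) (𝓝 (x, u)) (𝓝 (F (x, u))) :=
    hF.comp (f := fun q : ι × α => (x, q.2)) (continuousAt_const.prodMk continuousAt_snd)
  exact hslice.prodMk_nhds hF

theorem hasFDerivAt_of_mem_closure {𝕜 : Type*} [NontriviallyNormedField 𝕜]
    [IsRCLikeNormedField 𝕜] {X : Type*} [TopologicalSpace X]
    {E : Type*} [NormedAddCommGroup E] [NormedSpace 𝕜 E]
    {G : Type*} [NormedAddCommGroup G] [NormedSpace 𝕜 G]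
    {g : X → E → G} {h : X → E → E →L[𝕜] G} {D : Set X} {s : Set E} {x : X} {u : E}
    (hx : x ∈ closure D) (hs : s ∈ 𝓝 u)
    (hh : ContinuousAt (fun p : X × E => h p.1 p.2) (x, u))
    (hg : ∀ w ∈ s, ContinuousAt (fun y => g y w) x)
    (hdiff : ∀ y ∈ D, ∀ w ∈ s, HasFDerivAt (g y) (h y w) w) :
    HasFDerivAt (g x) (h x u) u := by
  have : (𝓝[D] x).NeBot := mem_closure_iff_nhdsWithin_neBot.mp hx
  refine hasFDerivAt_of_tendstoUniformlyOnFilter (l := 𝓝[D] x) (f := g) (f' := h) ?_ ?_ ?_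
  · exact hh.tendstoUniformlyOnFilter_curry.mono_left nhdsWithin_le_nhds
  · filter_upwards [prod_mem_prod self_mem_nhdsWithin hs] with p ⟨hpD, hps⟩
    exact hdiff p.1 hpD p.2 hps
  · filter_upwards [hs] with w hw
    exact (hg w hw).tendsto.mono_left nhdsWithin_le_nhds

theorem stmt_8_general {X : Type*} [MetricSpace X] {d : ℕ}
    (U : Set (EuclideanSpace ℝ (Fin d))) (hU : IsOpen U)
    {E : Type*} [NormedAddCommGroup E] [NormedSpace ℝ E]
    (g : X → EuclideanSpace ℝ (Fin d) → E)
    (h : X → EuclideanSpace ℝ (Fin d) → EuclideanSpace ℝ (Fin d) →L[ℝ] E)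
    (hg : ∀ u ∈ U, Continuous fun x => g x u)
    (hh : ContinuousOn (fun p : X × EuclideanSpace ℝ (Fin d) => h p.1 p.2)
      (Set.univ ×ˢ U))
    (D : Set X) (hD : Dense D)
    (hdiff : ∀ x ∈ D, ∀ u ∈ U, HasFDerivAt (g x) (h x u) u) :
    ∀ x : X, ∀ u ∈ U, HasFDerivAt (g x) (h x u) u := by
  intro x u hu
  have hhxu : ContinuousAt (fun p : X × EuclideanSpace ℝ (Fin d) => h p.1 p.2) (x, u) :=
    hh.continuousAt ((isOpen_univ.prod hU).mem_nhds ⟨Set.mem_univ x, hu⟩)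
  exact hasFDerivAt_of_mem_closure (hD x) (hU.mem_nhds hu) hhxu
    (fun w hw => (hg w hw).continuousAt) hdiff

/-- Upgrading differentiability with respect to parameters from a dense set of base
points: if `x ↦ g x u` is continuous for each `u ∈ U`, `(x,u) ↦ h x u` is jointly
continuous, and for `x` in a dense set `g x` is differentiable on the open convex set `U`
with derivative `h x`, then the same holds for every `x`. -/
theorem stmt_8 {X : Type*} [MetricSpace X] {d : ℕ}
    (U : Set (EuclideanSpace ℝ (Fin d))) (hU : IsOpen U) (hconv : Convex ℝ U)
    {E : Type*} [NormedAddCommGroup E] [NormedSpace ℝ E] [CompleteSpace E]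
    (g : X → EuclideanSpace ℝ (Fin d) → E)
    (h : X → EuclideanSpace ℝ (Fin d) → EuclideanSpace ℝ (Fin d) →L[ℝ] E)
    (hg : ∀ u ∈ U, Continuous fun x => g x u)
    (hh : ContinuousOn (fun p : X × EuclideanSpace ℝ (Fin d) => h p.1 p.2)
      (Set.univ ×ˢ U))
    (D : Set X) (hD : Dense D)
    (hdiff : ∀ x ∈ D, ∀ u ∈ U, HasFDerivAt (g x) (h x u) u) :
    ∀ x : X, ∀ u ∈ U, HasFDerivAt (g x) (h x u) u :=
  stmt_8_general U hU g h hg hh D hD hdiff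
end

section
/- Let A be a unital Banach algebra over ℝ, U ⊆ ℝ^d open, M a metric space, f : M → M, p ∈ M with f(p) = p, and x ∈ M, C > 0, 0 < λ < 1 with d(f^[n](x), p) ≤ C λⁿ for all n ≥ 0. Let 0 < α ≤ 1 and K > 0. Let η : M → U → A and φ : M → U → A satisfy: (i) φ(z)(u) is invertible with ‖φ(z)(u)‖ ≤ K and ‖φ(z)(u)⁻¹‖ ≤ K for all z, u; (ii) φ(f z)(u) = η(z)(u) * φ(z)(u) for all z ∈ M, u ∈ U; (iii) for every z ∈ M, u ↦ η(z)(u) is Fréchet differentiable on U with derivative Dη(z)(u) : ℝ^d → A satisfying ‖Dη(z)(u)‖ ≤ K; (iv) for all z, z' ∈ M and u ∈ U: ‖η(z)(u) − η(z')(u)‖ ≤ K d(z,z')^α, ‖Dη(z)(u) − Dη(z')(u)‖ ≤ K d(z,z')^α, and ‖φ(z)(u) − φ(z')(u)‖ ≤ K d(z,z')^α; (v) the fixed-point obstruction vanishes: φ(p)(u)⁻¹ * (Dη(p)(u) v) * φ(p)(u) = 0 for all u ∈ U, v ∈ ℝ^d; (vi) u ↦ φ(p)(u) is Fréchet differentiable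 on U. Then u ↦ φ(x)(u) is Fréchet differentiable at every u ∈ U. -/
/-!
Along the orbit, `φ (fⁿ x) · φ(x)⁻¹ = η(fⁿ⁻¹ x) ⋯ η(x)` is differentiable in `u`, and converges to
`φ(p) · φ(x)⁻¹` because `fⁿ x → p` exponentially and `φ` is Hölder. Its derivative is
`φ(fⁿ x) · (∑ i < n, φ(fⁱ⁺¹ x)⁻¹ · Dη(fⁱ x) · φ(fⁱ x)) · φ(x)⁻¹`; the vanishing obstruction forces
`Dη(p) = 0`, so by Hölder continuity of `Dη` the terms are `O(λ^{αi})` and the derivatives converge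
uniformly. Hence the limit is differentiable, and so is `φ(x) = (φ(p) · φ(x)⁻¹)⁻¹ · φ(p)`.
-/

open Filter Topology Finset ContinuousLinearMap

theorem rpow_le_mul_rpow_pow {t C lam α : ℝ} {n : ℕ} (ht : 0 ≤ t) (hC : 0 ≤ C) (hlam : 0 ≤ lam)
    (hα : 0 ≤ α) (h : t ≤ C * lam ^ n) : t ^ α ≤ C ^ α * (lam ^ α) ^ n :=
  calc t ^ α ≤ (C * lam ^ n) ^ α := Real.rpow_le_rpow ht h hα
    _ = C ^ α * (lam ^ α) ^ n := by
      rw [Real.mul_rpow hC (pow_nonneg hlam n), Real.rpow_pow_comm hlam]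

theorem exists_tendstoUniformlyOn_of_norm_sub_le_geometric {β X : Type*} [NormedAddCommGroup X]
    [CompleteSpace X] {F : ℕ → β → X} {s : Set β} {c r : ℝ} (hr0 : 0 ≤ r) (hr1 : r < 1)
    (hF : ∀ n, ∀ u ∈ s, ‖F (n + 1) u - F n u‖ ≤ c * r ^ n) :
    ∃ G : β → X, TendstoUniformlyOn F G atTop s := by
  have hF' : ∀ u ∈ s, ∀ n, dist (F n u) (F (n + 1) u) ≤ c * r ^ n := fun u hu n =>
    (dist_eq_norm' _ _).trans_le (hF n u hu)
  have hlim : ∀ u ∈ s, ∃ x, Tendsto (F · u) atTop (𝓝 x) := fun u hu =>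
    cauchySeq_tendsto_of_complete (cauchySeq_of_le_geometric r c hr1 (hF' u hu))
  choose! G hG using hlim
  refine ⟨G, Metric.tendstoUniformlyOn_iff.2 fun ε hε => ?_⟩
  have hsmall : Tendsto (fun n : ℕ => c * r ^ n / (1 - r)) atTop (𝓝 0) := by
    simpa using ((tendsto_pow_atTop_nhds_zero_of_lt_one hr0 hr1).const_mul c).div_const (1 - r)
  filter_upwards [hsmall.eventually_lt_const hε] with n hn u hu
  rw [dist_comm]
  exact (dist_le_of_le_geometric_of_tendsto r c hr1 (hF' u hu) (hG u hu) n).trans_lt hn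

theorem differentiableOn_of_tendsto_of_norm_fderiv_sub_le_geometric {𝕜 E F : Type*} [RCLike 𝕜]
    [NormedAddCommGroup E] [NormedSpace 𝕜 E] [NormedAddCommGroup F] [NormedSpace 𝕜 F]
    [CompleteSpace F] {U : Set E} (hU : IsOpen U) {f : ℕ → E → F} {f' : ℕ → E → E →L[𝕜] F}
    {g : E → F} {c r : ℝ} (hr0 : 0 ≤ r) (hr1 : r < 1)
    (hf : ∀ n, ∀ u ∈ U, HasFDerivAt (f n) (f' n u) u)
    (hfg : ∀ u ∈ U, Tendsto (f · u) atTop (𝓝 (g u)))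
    (hf' : ∀ n, ∀ u ∈ U, ‖f' (n + 1) u - f' n u‖ ≤ c * r ^ n) :
    DifferentiableOn 𝕜 g U := by
  obtain ⟨g', hg'⟩ := exists_tendstoUniformlyOn_of_norm_sub_le_geometric hr0 hr1 hf'
  exact fun u hu =>
    (hasFDerivAt_of_tendstoUniformlyOn hU hg' hf hfg hu).differentiableAt.differentiableWithinAt

noncomputable section Cocycle

variable {𝕜 E A : Type*} [RCLike 𝕜] [NormedAddCommGroup E] [NormedSpace 𝕜 E]
  [NormedRing A] [NormedAlgebra 𝕜 A]

def cocycleDerivTerm (φ : ℕ → E → A) (Dη : ℕ → E → E →L[𝕜] A) (i : ℕ) (u : E) : E →L[𝕜] A :=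
  (mulLeftRight 𝕜 A (Ring.inverse (φ (i + 1) u)) (φ i u)).comp (Dη i u)

def cocycleDeriv (φ : ℕ → E → A) (Dη : ℕ → E → E →L[𝕜] A) (n : ℕ) (u : E) : E →L[𝕜] A :=
  (mulLeftRight 𝕜 A (φ n u) (Ring.inverse (φ 0 u))).comp
    (∑ i ∈ range n, cocycleDerivTerm φ Dη i u)

theorem norm_mulLeftRight_comp_le (a b : A) (L : E →L[𝕜] A) :
    ‖(mulLeftRight 𝕜 A a b).comp L‖ ≤ ‖a‖ * ‖b‖ * ‖L‖ :=
  (opNorm_comp_le _ _).trans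
    (mul_le_mul_of_nonneg_right (opNorm_mulLeftRight_apply_apply_le 𝕜 A a b) (norm_nonneg L))

variable {U : Set E} {φ η : ℕ → E → A} {Dη : ℕ → E → E →L[𝕜] A}

theorem hasFDerivAt_mul_inverse_of_cocycle (hU : IsOpen U)
    (hunit : ∀ n, ∀ u ∈ U, IsUnit (φ n u))
    (hcoh : ∀ n, ∀ u ∈ U, φ (n + 1) u = η n u * φ n u)
    (hη : ∀ n, ∀ u ∈ U, HasFDerivAt (η n) (Dη n u) u) (n : ℕ) :
    ∀ u ∈ U, HasFDerivAt (fun w => φ n w * Ring.inverse (φ 0 w)) (cocycleDeriv φ Dη n u) u := by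
  induction n with
  | zero =>
    intro u hu
    have hone : (fun _ => (1 : A)) =ᶠ[𝓝 u] fun w => φ 0 w * Ring.inverse (φ 0 w) :=
      eventually_of_mem (hU.mem_nhds hu) fun w hw => (Ring.mul_inverse_cancel _ (hunit 0 w hw)).symm
    simpa [cocycleDeriv] using (hasFDerivAt_const (1 : A) u).congr_of_eventuallyEq hone.symm
  | succ n ih =>
    intro u hu
    have hstep : (fun w => η n w * (φ n w * Ring.inverse (φ 0 w))) =ᶠ[𝓝 u]
        fun w => φ (n + 1) w * Ring.inverse (φ 0 w) :=
      eventually_of_mem (hU.mem_nhds hu) fun w hw => by simp only [hcoh n w hw, mul_assoc]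
    convert ((hη n u hu).mul' (ih u hu)).congr_of_eventuallyEq hstep.symm using 1
    ext v
    simp only [cocycleDeriv, cocycleDerivTerm, sum_range_succ, comp_add, add_apply, comp_apply,
      mulLeftRight_apply, smul_apply, smul_eq_mul, MulOpposite.smul_eq_mul_unop,
      MulOpposite.unop_op]
    simp only [mul_assoc, Ring.mul_inverse_cancel_left _ _ (hunit _ u hu)]
    rw [hcoh n u hu, mul_assoc]

section Bounds

variable {φlim : E → A} {u : E} {K c r : ℝ}

theorem norm_cocycleDerivTerm_le {i : ℕ} (hinv : ‖Ring.inverse (φ (i + 1) u)‖ ≤ K)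
    (hφ : ‖φ i u‖ ≤ K) (hDη : ‖Dη i u‖ ≤ c * r ^ i) :
    ‖cocycleDerivTerm φ Dη i u‖ ≤ K * K * (c * r ^ i) := by
  have hK : 0 ≤ K := (norm_nonneg _).trans hφ
  calc ‖cocycleDerivTerm φ Dη i u‖
      ≤ ‖Ring.inverse (φ (i + 1) u)‖ * ‖φ i u‖ * ‖Dη i u‖ := norm_mulLeftRight_comp_le _ _ _
    _ ≤ K * K * (c * r ^ i) := by gcongr

theorem norm_sum_cocycleDerivTerm_le (hr0 : 0 ≤ r) (hr1 : r < 1)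
    (hinv : ∀ n, ‖Ring.inverse (φ n u)‖ ≤ K) (hφ : ∀ n, ‖φ n u‖ ≤ K)
    (hDη : ∀ n, ‖Dη n u‖ ≤ c * r ^ n) (n : ℕ) :
    ‖∑ i ∈ range n, cocycleDerivTerm φ Dη i u‖ ≤ K * K * c / (1 - r) := by
  have hc : 0 ≤ c := (norm_nonneg _).trans (by simpa using hDη 0)
  calc ‖∑ i ∈ range n, cocycleDerivTerm φ Dη i u‖
      ≤ ∑ i ∈ range n, K * K * c * r ^ i := by
        refine (norm_sum_le _ _).trans (sum_le_sum fun i _ => ?_)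
        rw [mul_assoc (K * K)]
        exact norm_cocycleDerivTerm_le (hinv _) (hφ _) (hDη _)
    _ = K * K * c * ∑ i ∈ Ico 0 n, r ^ i := by rw [← mul_sum, range_eq_Ico]
    _ ≤ K * K * c * (r ^ 0 / (1 - r)) :=
        mul_le_mul_of_nonneg_left (geom_sum_Ico_le_of_lt_one hr0 hr1)
          (mul_nonneg (mul_self_nonneg K) hc)
    _ = K * K * c / (1 - r) := by ring

theorem norm_cocycleDeriv_succ_sub_le (hr0 : 0 ≤ r) (hr1 : r < 1)
    (hinv : ∀ n, ‖Ring.inverse (φ n u)‖ ≤ K) (hφ : ∀ n, ‖φ n u‖ ≤ K)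
    (hDη : ∀ n, ‖Dη n u‖ ≤ c * r ^ n) (hφlim : ∀ n, ‖φ n u - φlim u‖ ≤ c * r ^ n) (n : ℕ) :
    ‖cocycleDeriv φ Dη (n + 1) u - cocycleDeriv φ Dη n u‖
      ≤ (2 * c * K * (K * K * c / (1 - r)) + K * K * (K * K * c)) * r ^ n := by
  set ψ := Ring.inverse (φ 0 u)
  set T := cocycleDerivTerm φ Dη n u
  set S := ∑ i ∈ range (n + 1), cocycleDerivTerm φ Dη i u
  have hK : 0 ≤ K := (norm_nonneg _).trans (hφ 0)
  have hc : 0 ≤ c := (norm_nonneg _).trans (by simpa using hDη 0)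
  have hsplit : cocycleDeriv φ Dη (n + 1) u - cocycleDeriv φ Dη n u
      = (mulLeftRight 𝕜 A (φ (n + 1) u - φ n u) ψ).comp S
        + (mulLeftRight 𝕜 A (φ n u) ψ).comp T := by
    simp only [cocycleDeriv, S, sum_range_succ, map_sub, sub_apply, sub_comp, comp_add]
    abel
  have hstep : ‖φ (n + 1) u - φ n u‖ ≤ 2 * c * r ^ n := by
    have hpow : r ^ (n + 1) ≤ r ^ n := pow_le_pow_of_le_one hr0 hr1.le n.le_succ
    calc ‖φ (n + 1) u - φ n u‖ ≤ ‖φ (n + 1) u - φlim u‖ + ‖φ n u - φlim u‖ :=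
          norm_sub_le_norm_sub_add_norm_sub _ _ _ |>.trans (by rw [norm_sub_rev (φlim u)])
      _ ≤ c * r ^ (n + 1) + c * r ^ n := add_le_add (hφlim _) (hφlim _)
      _ ≤ 2 * c * r ^ n := by nlinarith
  rw [hsplit]
  calc _ ≤ ‖φ (n + 1) u - φ n u‖ * ‖ψ‖ * ‖S‖ + ‖φ n u‖ * ‖ψ‖ * ‖T‖ :=
        (norm_add_le _ _).trans
          (add_le_add (norm_mulLeftRight_comp_le _ _ _) (norm_mulLeftRight_comp_le _ _ _))
    _ ≤ 2 * c * r ^ n * K * (K * K * c / (1 - r)) + K * K * (K * K * (c * r ^ n)) := by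
        gcongr
        · exact hinv 0
        · exact norm_sum_cocycleDerivTerm_le hr0 hr1 hinv hφ hDη _
        · exact hφ n
        · exact hinv 0
        · exact norm_cocycleDerivTerm_le (hinv _) (hφ _) (hDη _)
    _ = _ := by ring

end Bounds

theorem differentiableOn_of_cocycle {φlim : E → A} {K c r : ℝ} [CompleteSpace A] (hU : IsOpen U)
    (hr0 : 0 ≤ r) (hr1 : r < 1) (hunit : ∀ n, ∀ u ∈ U, IsUnit (φ n u))
    (hφ : ∀ n, ∀ u ∈ U, ‖φ n u‖ ≤ K) (hinv : ∀ n, ∀ u ∈ U, ‖Ring.inverse (φ n u)‖ ≤ K)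
    (hcoh : ∀ n, ∀ u ∈ U, φ (n + 1) u = η n u * φ n u)
    (hη : ∀ n, ∀ u ∈ U, HasFDerivAt (η n) (Dη n u) u)
    (hDη : ∀ n, ∀ u ∈ U, ‖Dη n u‖ ≤ c * r ^ n)
    (hφlim : ∀ n, ∀ u ∈ U, ‖φ n u - φlim u‖ ≤ c * r ^ n)
    (hlimunit : ∀ u ∈ U, IsUnit (φlim u)) (hlimdiff : DifferentiableOn 𝕜 φlim U) :
    DifferentiableOn 𝕜 (φ 0) U := by
  set g := fun w => φlim w * Ring.inverse (φ 0 w)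
  have hconv : ∀ u ∈ U, Tendsto (fun n => φ n u * Ring.inverse (φ 0 u)) atTop (𝓝 (g u)) := by
    intro u hu
    refine Tendsto.mul_const _ (tendsto_iff_norm_sub_tendsto_zero.2 ?_)
    refine squeeze_zero (fun _ => norm_nonneg _) (hφlim · u hu) ?_
    simpa using (tendsto_pow_atTop_nhds_zero_of_lt_one hr0 hr1).const_mul c
  have hg : DifferentiableOn 𝕜 g U :=
    differentiableOn_of_tendsto_of_norm_fderiv_sub_le_geometric hU hr0 hr1
      (hasFDerivAt_mul_inverse_of_cocycle hU hunit hcoh hη) hconv fun n u hu =>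
        norm_cocycleDeriv_succ_sub_le hr0 hr1 (hinv · u hu) (hφ · u hu) (hDη · u hu)
          (hφlim · u hu) n
  have hgunit : ∀ u ∈ U, IsUnit (g u) := fun u hu =>
    (hlimunit u hu).mul (hunit 0 u hu).ringInverse
  have hφ0 : ∀ u ∈ U, φ 0 u = Ring.inverse (g u) * φlim u := fun u hu => by
    rw [← Ring.inverse_mul_cancel_left _ (φ 0 u) (hgunit u hu), mul_assoc,
      Ring.inverse_mul_cancel _ (hunit 0 u hu), mul_one]
  refine DifferentiableOn.congr (fun u hu => ?_) hφ0
  have hinvg : DifferentiableAt 𝕜 (fun w => Ring.inverse (g w)) u :=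
    (differentiableAt_inverse (hgunit u hu)).comp u ((hg u hu).differentiableAt (hU.mem_nhds hu))
  exact hinvg.differentiableWithinAt.mul (hlimdiff u hu)

end Cocycle

theorem stmt_9_general {A : Type*} [NormedRing A] [NormedAlgebra ℝ A] [CompleteSpace A]
    {d : ℕ} (U : Set (EuclideanSpace ℝ (Fin d))) (hU : IsOpen U)
    {M : Type*} [MetricSpace M] (f : M → M) (p : M)
    (x : M) (C : ℝ) (hC : 0 < C) (lam : ℝ) (hlam0 : 0 < lam) (hlam1 : lam < 1)
    (hx : ∀ n : ℕ, dist (f^[n] x) p ≤ C * lam ^ n)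
    (α : ℝ) (hα0 : 0 < α) (K : ℝ) (hK : 0 < K)
    (η φ : M → EuclideanSpace ℝ (Fin d) → A)
    (Dη : M → EuclideanSpace ℝ (Fin d) → EuclideanSpace ℝ (Fin d) →L[ℝ] A)
    (hφ : ∀ z : M, ∀ u ∈ U,
      IsUnit (φ z u) ∧ ‖φ z u‖ ≤ K ∧ ‖Ring.inverse (φ z u)‖ ≤ K)
    (hcoh : ∀ z : M, ∀ u ∈ U, φ (f z) u = η z u * φ z u)
    (hdη : ∀ z : M, ∀ u ∈ U, HasFDerivAt (η z) (Dη z u) u ∧ ‖Dη z u‖ ≤ K)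
    (hHolDη : ∀ z z' : M, ∀ u ∈ U, ‖Dη z u - Dη z' u‖ ≤ K * dist z z' ^ α)
    (hHolφ : ∀ z z' : M, ∀ u ∈ U, ‖φ z u - φ z' u‖ ≤ K * dist z z' ^ α)
    (hobs : ∀ u ∈ U, ∀ v : EuclideanSpace ℝ (Fin d),
      Ring.inverse (φ p u) * (Dη p u v) * φ p u = 0)
    (hdφp : ∀ u ∈ U, DifferentiableAt ℝ (φ p) u) :
    ∀ u ∈ U, DifferentiableAt ℝ (fun w => φ x w) u := by
  have hdist : ∀ n, K * dist (f^[n] x) p ^ α ≤ K * C ^ α * (lam ^ α) ^ n := fun n => by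
    rw [mul_assoc]
    exact mul_le_mul_of_nonneg_left
      (rpow_le_mul_rpow_pow dist_nonneg hC.le hlam0.le hα0.le (hx n)) hK.le
  have hDηp : ∀ u ∈ U, Dη p u = 0 := fun u hu => by
    ext v
    have hv := hobs u hu v
    rwa [(hφ p u hu).1.mul_left_eq_zero, (hφ p u hu).1.ringInverse.mul_right_eq_zero] at hv
  have hdiff : DifferentiableOn ℝ (φ x) U :=
    differentiableOn_of_cocycle (φ := fun n => φ (f^[n] x)) (η := fun n => η (f^[n] x))
      (Dη := fun n => Dη (f^[n] x)) (φlim := φ p) hU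
      (Real.rpow_nonneg hlam0.le α) (Real.rpow_lt_one hlam0.le hlam1 hα0)
      (fun n u hu => (hφ _ u hu).1) (fun n u hu => (hφ _ u hu).2.1)
      (fun n u hu => (hφ _ u hu).2.2)
      (fun n u hu => by rw [Function.iterate_succ_apply']; exact hcoh _ u hu)
      (fun n u hu => (hdη _ u hu).1)
      (fun n u hu => by simpa only [hDηp u hu, sub_zero] using (hHolDη _ p u hu).trans (hdist n))
      (fun n u hu => (hHolφ _ p u hu).trans (hdist n))
      (fun u hu => (hφ p u hu).1) (fun u hu => (hdφp u hu).differentiableWithinAt)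
  exact fun u hu => hdiff.differentiableAt (hU.mem_nhds hu)

/-- Differentiability with respect to parameters of solutions of a Banach-algebra valued
cohomology equation at points of the exponential stable set of a fixed point `p`:
under uniform bounds, Hölder continuity in the base point, vanishing of the fixed-point
obstruction and differentiability of `u ↦ φ p u`, the map `u ↦ φ x u` is differentiable
on `U` for any `x` with `d(f^[n] x, p) ≤ C λⁿ`. -/
theorem stmt_9 {A : Type*} [NormedRing A] [NormedAlgebra ℝ A] [CompleteSpace A]
    {d : ℕ} (U : Set (EuclideanSpace ℝ (Fin d))) (hU : IsOpen U)
    {M : Type*} [MetricSpace M] (f : M → M) (p : M) (hp : f p = p)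
    (x : M) (C : ℝ) (hC : 0 < C) (lam : ℝ) (hlam0 : 0 < lam) (hlam1 : lam < 1)
    (hx : ∀ n : ℕ, dist (f^[n] x) p ≤ C * lam ^ n)
    (α : ℝ) (hα0 : 0 < α) (hα1 : α ≤ 1) (K : ℝ) (hK : 0 < K)
    (η φ : M → EuclideanSpace ℝ (Fin d) → A)
    (Dη : M → EuclideanSpace ℝ (Fin d) → EuclideanSpace ℝ (Fin d) →L[ℝ] A)
    (hφ : ∀ z : M, ∀ u ∈ U,
      IsUnit (φ z u) ∧ ‖φ z u‖ ≤ K ∧ ‖Ring.inverse (φ z u)‖ ≤ K)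
    (hcoh : ∀ z : M, ∀ u ∈ U, φ (f z) u = η z u * φ z u)
    (hdη : ∀ z : M, ∀ u ∈ U, HasFDerivAt (η z) (Dη z u) u ∧ ‖Dη z u‖ ≤ K)
    (hHolη : ∀ z z' : M, ∀ u ∈ U, ‖η z u - η z' u‖ ≤ K * dist z z' ^ α)
    (hHolDη : ∀ z z' : M, ∀ u ∈ U, ‖Dη z u - Dη z' u‖ ≤ K * dist z z' ^ α)
    (hHolφ : ∀ z z' : M, ∀ u ∈ U, ‖φ z u - φ z' u‖ ≤ K * dist z z' ^ α)
    (hobs : ∀ u ∈ U, ∀ v : EuclideanSpace ℝ (Fin d),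
      Ring.inverse (φ p u) * (Dη p u v) * φ p u = 0)
    (hdφp : ∀ u ∈ U, DifferentiableAt ℝ (φ p) u) :
    ∀ u ∈ U, DifferentiableAt ℝ (fun w => φ x w) u :=
  stmt_9_general U hU f p x C hC lam hlam0 hlam1 hx α hα0 K hK η φ Dη hφ hcoh hdη hHolDη hHolφ hobs
    hdφp
end

section
/- Let A be a unital Banach algebra over ℝ, U ⊆ ℝ^d open, M a compact metric space, f : M → M continuous, p ∈ M with f(p) = p, 0 < λ < 1, and suppose the exponential stable set S := { x ∈ M : ∃ C > 0, ∀ n ≥ 0, d(f^[n](x), p) ≤ C λⁿ } is dense in M. Let 0 < α ≤ 1, K > 0, and let η : M → U → A, φ : M → U → A satisfy: (i) φ(z)(u) is invertible with ‖φ(z)(u)‖ ≤ K and ‖φ(z)(u)⁻¹‖ ≤ K, and (z,u) ↦ φ(z)(u) is continuous; (ii) φ(f z)(u) = η(z)(u) * φ(z)(u) for all z, u; (iii) for every z, u ↦ η(z)(u) is Fréchet differentiable with derivative Dη(z)(u) satisfying ‖Dη(z)(u)‖ ≤ K, and (z,u) ↦ Dη(z)(u) is continuous; (iv) for all z, z',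 u: ‖η(z)(u) − η(z')(u)‖ ≤ K d(z,z')^α, ‖Dη(z)(u) − Dη(z')(u)‖ ≤ K d(z,z')^α, ‖φ(z)(u) − φ(z')(u)‖ ≤ K d(z,z')^α; (v) u ↦ φ(p)(u) is Fréchet differentiable with derivative γ'(u) : ℝ^d → A. Suppose further that ξ : M → U → (ℝ^d →L A) is continuous in (z,u) and satisfies the commutative cohomology equation ξ(f z)(u) v = ξ(z)(u) v + φ(f z)(u)⁻¹ * (Dη(z)(u) v) * φ(z)(u) for all z, u, v, together with the normalization ξ(p)(u) v = φ(p)(u)⁻¹ * (γ'(u) v). Then for every z ∈ M and u ∈ U, the map w ↦ φ(z)(w) is Fréchet differentiable at u with derivative v ↦ φ(z)(u) * (ξ(z)(u) v). -/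
/-!
On the stable set the orbit `fⁿ z` tends to `p`, and the cohomology equation writes
`φ z · (φ (fⁿ z))⁻¹` as a product of inverses of the `η`'s, hence as a differentiable function
whose derivative is computed from the commutative equation for `ξ`. Multiplying by `φ p` gives
differentiable approximations of `φ z` whose derivatives converge locally uniformly (by joint
continuity of `φ` and `ξ`), so `φ z` has logarithmic derivative `ξ z`. The same uniform-limit
argument, now along the dense stable set, extends this to every `z`.
-/

open Filter Topology ContinuousLinearMap

theorem ContinuousAt.tendstoUniformlyOnFilter {X E Y : Type*} [TopologicalSpace X]
    [TopologicalSpace E] [UniformSpace Y] {F : X → E → Y} {p : X} {x : E}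
    (hF : ContinuousAt (Function.uncurry F) (p, x)) :
    TendstoUniformlyOnFilter F (F p) (𝓝 p) (𝓝 x) := by
  rw [tendstoUniformlyOnFilter_iff_tendsto, ← nhds_prod_eq]
  have hpair := ((continuous_const (y := p)).prodMk continuous_snd).tendsto (p, x)
  exact ((hF.tendsto.comp hpair).prodMk_nhds hF.tendsto).mono_right (nhds_le_uniformity _)

theorem hasFDerivAt_of_eventually_hasFDerivAt {𝕜 X E G : Type*} [NontriviallyNormedField 𝕜]
    [IsRCLikeNormedField 𝕜] [TopologicalSpace X] [NormedAddCommGroup E] [NormedSpace 𝕜 E]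
    [NormedAddCommGroup G] [NormedSpace 𝕜 G]
    {F : X → E → G} {F' : X → E → E →L[𝕜] G} {l : Filter X} [l.NeBot]
    {p : X} {x : E} {s : Set E} (hl : l ≤ 𝓝 p)
    (hF' : ContinuousAt (Function.uncurry F') (p, x)) (hs : s ∈ 𝓝 x)
    (hF : ∀ᶠ y in l, ∀ w ∈ s, HasFDerivAt (F y) (F' y w) w)
    (hFp : ∀ w ∈ s, ContinuousAt (fun y => F y w) p) :
    HasFDerivAt (F p) (F' p x) x :=
  hasFDerivAt_of_tendstoUniformlyOnFilter (hF'.tendstoUniformlyOnFilter.mono_left hl)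
    ((hF.prod_mk hs).mono fun _ h => h.1 _ h.2)
    (eventually_of_mem hs fun w hw => (hFp w hw).tendsto.mono_left hl)

theorem Ring.isUnit_and_inverse_eq_of_eq_mul {A : Type*} [Ring A] {x y z : A} (hy : IsUnit y)
    (hz : IsUnit z) (h : z = x * y) : IsUnit x ∧ Ring.inverse x = y * Ring.inverse z := by
  have hx : x = z * Ring.inverse y := by rw [h, Ring.mul_inverse_cancel_right _ _ hy]
  subst hx
  exact ⟨hz.mul hy.ringInverse, by rw [Ring.inverse_mul (.inl hz), Ring.inverse_inverse hy]⟩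

theorem HasFDerivAt.mul_inverse_of_eq_mul {𝕜 E A : Type*} [NontriviallyNormedField 𝕜]
    [NormedAddCommGroup E] [NormedSpace 𝕜 E] [NormedRing A] [NormedAlgebra 𝕜 A]
    [HasSummableGeomSeries A] {a b c e : E → A} {L e' : E →L[𝕜] A} {w : E}
    (hbc : ∀ᶠ w' in 𝓝 w, IsUnit (b w') ∧ IsUnit (c w') ∧ c w' = e w' * b w')
    (hab : HasFDerivAt (fun w' => a w' * Ring.inverse (b w'))
      (mulLeftRight 𝕜 A (a w) (Ring.inverse (b w)) ∘L L) w)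
    (he : HasFDerivAt e e' w) :
    HasFDerivAt (fun w' => a w' * Ring.inverse (c w'))
      (mulLeftRight 𝕜 A (a w) (Ring.inverse (c w)) ∘L
        (L - mulLeftRight 𝕜 A (Ring.inverse (c w)) (b w) ∘L e')) w := by
  obtain ⟨hb, hc, hcbe⟩ := hbc.self_of_nhds
  obtain ⟨he_unit, he_inv⟩ := Ring.isUnit_and_inverse_eq_of_eq_mul hb hc hcbe
  have hinv : HasFDerivAt (fun w' => Ring.inverse (e w'))
      ((-mulLeftRight 𝕜 A (Ring.inverse (e w)) (Ring.inverse (e w))) ∘L e') w := by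
    have h := hasFDerivAt_ringInverse (𝕜 := 𝕜) he_unit.unit
    rw [← Ring.inverse_unit, he_unit.unit_spec] at h
    exact h.comp w he
  have hfactor : (fun w' => a w' * Ring.inverse (b w')) * (fun w' => Ring.inverse (e w'))
      =ᶠ[𝓝 w] fun w' => a w' * Ring.inverse (c w') := by
    filter_upwards [hbc] with w' ⟨hb', hc', hcbe'⟩
    simp only [Pi.mul_apply, (Ring.isUnit_and_inverse_eq_of_eq_mul hb' hc' hcbe').2, mul_assoc,
      Ring.inverse_mul_cancel_left _ _ hb']
  convert (hab.mul' hinv).congr_of_eventuallyEq hfactor.symm using 1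
  ext v
  simp only [coe_comp, Function.comp_apply, mulLeftRight_apply, FunLike.coe_sub, Pi.sub_apply,
    add_apply, FunLike.coe_smul, Pi.smul_apply, neg_apply, smul_eq_mul, he_inv]
  rw [MulOpposite.smul_eq_mul_unop, MulOpposite.unop_op]
  simp only [mul_sub, sub_mul, mul_neg, mul_assoc, Ring.inverse_mul_cancel_left _ _ hb]
  abel

theorem ContinuousAt.ringInverse {X A : Type*} [TopologicalSpace X] [NormedRing A]
    [HasSummableGeomSeries A] {g : X → A} {x : X} (hg : ContinuousAt g x) (hx : IsUnit (g x)) :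
    ContinuousAt (fun y => Ring.inverse (g y)) x := by
  have h := NormedRing.inverse_continuousAt hx.unit
  rw [hx.unit_spec] at h
  exact h.comp hg

theorem ContinuousOn.continuousAt_uncurry_comp {X M E Y : Type*} [TopologicalSpace X]
    [TopologicalSpace M] [TopologicalSpace E] [TopologicalSpace Y] {φ : M → E → Y} {U : Set E}
    (hφ : ContinuousOn (Function.uncurry φ) (Set.univ ×ˢ U)) (hU : IsOpen U) {g : X → M}
    {h : X → E} {x : X} (hg : ContinuousAt g x) (hh : ContinuousAt h x) (hx : h x ∈ U) :
    ContinuousAt (fun t => φ (g t) (h t)) x :=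
  ContinuousAt.comp (f := fun t => (g t, h t))
    (hφ.continuousAt (prod_mem_nhds univ_mem (hU.mem_nhds hx))) (hg.prodMk hh)

section Cocycle

variable {𝕜 E A M : Type*} [NontriviallyNormedField 𝕜] [NormedAddCommGroup E]
  [NormedSpace 𝕜 E] [NormedRing A] [NormedAlgebra 𝕜 A] [HasSummableGeomSeries A]
  {f : M → M} {U : Set E}
  {η φ : M → E → A} {Dη ξ : M → E → E →L[𝕜] A}

theorem hasFDerivAt_mul_inverse_iterate (hU : IsOpen U)
    (hunit : ∀ z, ∀ u ∈ U, IsUnit (φ z u))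
    (hcoh : ∀ z, ∀ u ∈ U, φ (f z) u = η z u * φ z u)
    (hdη : ∀ z, ∀ u ∈ U, HasFDerivAt (η z) (Dη z u) u)
    (hξcoh : ∀ z, ∀ u ∈ U, ∀ v,
      ξ (f z) u v = ξ z u v + Ring.inverse (φ (f z) u) * Dη z u v * φ z u)
    (z : M) (n : ℕ) {w : E} (hw : w ∈ U) :
    HasFDerivAt (fun w' => φ z w' * Ring.inverse (φ (f^[n] z) w'))
      (mulLeftRight 𝕜 A (φ z w) (Ring.inverse (φ (f^[n] z) w)) ∘L
        (ξ z w - ξ (f^[n] z) w)) w := by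
  induction n generalizing w with
  | zero =>
    rw [Function.iterate_zero_apply, sub_self, comp_zero]
    refine (hasFDerivAt_const (1 : A) w).congr_of_eventuallyEq ?_
    filter_upwards [hU.mem_nhds hw] with w' hw'
    exact Ring.mul_inverse_cancel _ (hunit z w' hw')
  | succ n ih =>
    rw [Function.iterate_succ_apply']
    set y := f^[n] z
    have hstep := HasFDerivAt.mul_inverse_of_eq_mul (a := φ z) (c := φ (f y))
      (by filter_upwards [hU.mem_nhds hw] with w' hw'
          exact ⟨hunit y w' hw', hunit (f y) w' hw', hcoh y w' hw'⟩) (ih hw) (hdη y w hw)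
    convert hstep using 2
    ext v
    simp only [FunLike.coe_sub, Pi.sub_apply, coe_comp, Function.comp_apply, mulLeftRight_apply,
      hξcoh y w hw v]
    abel

theorem hasFDerivAt_of_tendsto_iterate [IsRCLikeNormedField 𝕜] [TopologicalSpace M]
    (hU : IsOpen U)
    (hunit : ∀ z, ∀ u ∈ U, IsUnit (φ z u))
    (hcoh : ∀ z, ∀ u ∈ U, φ (f z) u = η z u * φ z u)
    (hdη : ∀ z, ∀ u ∈ U, HasFDerivAt (η z) (Dη z u) u)
    (hξcoh : ∀ z, ∀ u ∈ U, ∀ v,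
      ξ (f z) u v = ξ z u v + Ring.inverse (φ (f z) u) * Dη z u v * φ z u)
    (hφcont : ContinuousOn (Function.uncurry φ) (Set.univ ×ˢ U))
    (hξcont : ContinuousOn (Function.uncurry ξ) (Set.univ ×ˢ U)) {p z : M}
    (hp : ∀ u ∈ U, HasFDerivAt (φ p) (mul 𝕜 A (φ p u) ∘L ξ p u) u)
    (hz : Tendsto (fun n => f^[n] z) atTop (𝓝 p)) {u : E} (hu : u ∈ U) :
    HasFDerivAt (φ z) (mul 𝕜 A (φ z u) ∘L ξ z u) u := by
  set F : M → E → A := fun y w => φ z w * Ring.inverse (φ y w) * φ p w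
  set F' : M → E → E →L[𝕜] A := fun y w =>
    mulLeftRight 𝕜 A (φ z w) (Ring.inverse (φ y w) * φ p w) ∘L (ξ z w - ξ y w) +
      mul 𝕜 A (φ z w * Ring.inverse (φ y w) * φ p w) ∘L ξ p w
  have hF : ∀ n, ∀ w ∈ U, HasFDerivAt (F (f^[n] z)) (F' (f^[n] z) w) w := by
    intro n w hw
    refine ((hasFDerivAt_mul_inverse_iterate hU hunit hcoh hdη hξcoh z n hw).mul'
      (hp w hw)).congr_fderiv ?_
    ext v
    simp only [comp_sub, add_apply, smul_apply, comp_apply, mul_apply', smul_eq_mul, sub_apply,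
      mulLeftRight_apply, MulOpposite.smul_eq_mul_unop, MulOpposite.unop_op, F']
    noncomm_ring
  have hF' : ContinuousAt (Function.uncurry F') (p, u) := by
    have hshape : ∀ {a b c : M × E → A} {L₁ L₂ L₃ : M × E → E →L[𝕜] A},
        ContinuousAt a (p, u) → ContinuousAt b (p, u) → ContinuousAt c (p, u) →
        ContinuousAt L₁ (p, u) → ContinuousAt L₂ (p, u) → ContinuousAt L₃ (p, u) →
        ContinuousAt (fun q => mulLeftRight 𝕜 A (a q) (b q * c q) ∘L (L₁ q - L₂ q) +
          mul 𝕜 A (a q * b q * c q) ∘L L₃ q) (p, u) := by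
      intros; fun_prop
    exact hshape
      (hφcont.continuousAt_uncurry_comp hU continuousAt_const continuousAt_snd hu)
      ((hφcont.continuousAt_uncurry_comp hU continuousAt_fst continuousAt_snd hu).ringInverse
        (hunit p u hu))
      (hφcont.continuousAt_uncurry_comp hU continuousAt_const continuousAt_snd hu)
      (hξcont.continuousAt_uncurry_comp hU continuousAt_const continuousAt_snd hu)
      (hξcont.continuousAt_uncurry_comp hU continuousAt_fst continuousAt_snd hu)
      (hξcont.continuousAt_uncurry_comp hU continuousAt_const continuousAt_snd hu)
  have hFp : ∀ w ∈ U, ContinuousAt (fun y => F y w) p := fun w hw =>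
    (continuousAt_const.mul
      ((hφcont.continuousAt_uncurry_comp hU continuousAt_id continuousAt_const hw).ringInverse
        (hunit p w hw))).mul continuousAt_const
  have hFpφ : F p =ᶠ[𝓝 u] φ z := by
    filter_upwards [hU.mem_nhds hu] with w hw
    exact Ring.inverse_mul_cancel_right _ _ (hunit p w hw)
  have hF'p : F' p u = mul 𝕜 A (φ z u) ∘L ξ z u := by
    ext v
    simp [F', Ring.inverse_mul_cancel _ (hunit p u hu),
      Ring.inverse_mul_cancel_right _ _ (hunit p u hu)]
  rw [← hF'p]
  exact (hasFDerivAt_of_eventually_hasFDerivAt hz hF' (hU.mem_nhds hu)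
    (eventually_map.mpr (Eventually.of_forall hF)) hFp).congr_of_eventuallyEq hFpφ.symm

end Cocycle

theorem stmt_10_general {A : Type*} [NormedRing A] [NormedAlgebra ℝ A] [CompleteSpace A]
    {d : ℕ} (U : Set (EuclideanSpace ℝ (Fin d))) (hU : IsOpen U)
    {M : Type*} [MetricSpace M] (f : M → M)
    (p : M) (lam : ℝ) (hlam0 : 0 < lam) (hlam1 : lam < 1)
    (hdense : Dense {x : M | ∃ C > (0:ℝ), ∀ n : ℕ, dist (f^[n] x) p ≤ C * lam ^ n})
    (K : ℝ)
    (η φ : M → EuclideanSpace ℝ (Fin d) → A)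
    (Dη : M → EuclideanSpace ℝ (Fin d) → EuclideanSpace ℝ (Fin d) →L[ℝ] A)
    (hφ : ∀ z : M, ∀ u ∈ U,
      IsUnit (φ z u) ∧ ‖φ z u‖ ≤ K ∧ ‖Ring.inverse (φ z u)‖ ≤ K)
    (hφcont : ContinuousOn (fun q : M × EuclideanSpace ℝ (Fin d) => φ q.1 q.2)
      (Set.univ ×ˢ U))
    (hcoh : ∀ z : M, ∀ u ∈ U, φ (f z) u = η z u * φ z u)
    (hdη : ∀ z : M, ∀ u ∈ U, HasFDerivAt (η z) (Dη z u) u ∧ ‖Dη z u‖ ≤ K)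
    (γ' : EuclideanSpace ℝ (Fin d) → EuclideanSpace ℝ (Fin d) →L[ℝ] A)
    (hγ : ∀ u ∈ U, HasFDerivAt (φ p) (γ' u) u)
    (ξ : M → EuclideanSpace ℝ (Fin d) → EuclideanSpace ℝ (Fin d) →L[ℝ] A)
    (hξcont : ContinuousOn (fun q : M × EuclideanSpace ℝ (Fin d) => ξ q.1 q.2)
      (Set.univ ×ˢ U))
    (hξcoh : ∀ z : M, ∀ u ∈ U, ∀ v : EuclideanSpace ℝ (Fin d),
      ξ (f z) u v = ξ z u v + Ring.inverse (φ (f z) u) * (Dη z u v) * φ z u)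
    (hξnorm : ∀ u ∈ U, ∀ v : EuclideanSpace ℝ (Fin d),
      ξ p u v = Ring.inverse (φ p u) * (γ' u v)) :
    ∀ z : M, ∀ u ∈ U, ∃ D : EuclideanSpace ℝ (Fin d) →L[ℝ] A,
      HasFDerivAt (fun w => φ z w) D u ∧ ∀ v, D v = φ z u * (ξ z u v) := by
  have hunit : ∀ z, ∀ u ∈ U, IsUnit (φ z u) := fun z u hu => (hφ z u hu).1
  have hφp : ∀ u ∈ U, HasFDerivAt (φ p) (mul ℝ A (φ p u) ∘L ξ p u) u := fun u hu =>
    (hγ u hu).congr_fderiv <| by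
      ext v
      simp [hξnorm u hu v, Ring.mul_inverse_cancel_left _ _ (hunit p u hu)]
  have hstable : ∀ z ∈ {x : M | ∃ C > (0:ℝ), ∀ n : ℕ, dist (f^[n] x) p ≤ C * lam ^ n},
      ∀ u ∈ U, HasFDerivAt (φ z) (mul ℝ A (φ z u) ∘L ξ z u) u := by
    rintro z ⟨C, -, hC⟩ u hu
    have horbit : Tendsto (fun n => f^[n] z) atTop (𝓝 p) := by
      refine tendsto_iff_dist_tendsto_zero.mpr (squeeze_zero (fun _ => dist_nonneg) hC ?_)
      simpa using (tendsto_pow_atTop_nhds_zero_of_lt_one hlam0.le hlam1).const_mul C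
    exact hasFDerivAt_of_tendsto_iterate hU hunit hcoh (fun z u hu => (hdη z u hu).1) hξcoh
      hφcont hξcont hφp horbit hu
  intro z u hu
  refine ⟨mul ℝ A (φ z u) ∘L ξ z u, ?_, fun v => rfl⟩
  have : (𝓝[_] z).NeBot := mem_closure_iff_nhdsWithin_neBot.mp (hdense z)
  refine hasFDerivAt_of_eventually_hasFDerivAt nhdsWithin_le_nhds ?_ (hU.mem_nhds hu)
    (eventually_nhdsWithin_of_forall hstable)
    fun w hw => hφcont.continuousAt_uncurry_comp hU continuousAt_id continuousAt_const hw
  exact (mul ℝ A).continuous.continuousAt.comp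
    (hφcont.continuousAt_uncurry_comp hU continuousAt_fst continuousAt_snd hu) |>.clm_comp
    (hξcont.continuousAt_uncurry_comp hU continuousAt_fst continuousAt_snd hu)

/-- The `r = 1` case of smooth dependence on parameters of solutions of cohomology
equations (Banach-algebra form): if the exponential stable set of the fixed point `p` is
dense, `φ` solves the cohomology equation with the stated bounds, continuity and Hölder
hypotheses, `u ↦ φ p u` is differentiable with derivative `γ'`, and `ξ` is a continuous
solution of the derived commutative cohomology equation with the natural normalization at
`p`, then `u ↦ φ z u` is differentiable for every `z` with derivative `v ↦ φ z u * ξ z u v`. -/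
theorem stmt_10 {A : Type*} [NormedRing A] [NormedAlgebra ℝ A] [CompleteSpace A]
    {d : ℕ} (U : Set (EuclideanSpace ℝ (Fin d))) (hU : IsOpen U)
    {M : Type*} [MetricSpace M] [CompactSpace M] (f : M → M) (hf : Continuous f)
    (p : M) (hp : f p = p) (lam : ℝ) (hlam0 : 0 < lam) (hlam1 : lam < 1)
    (hdense : Dense {x : M | ∃ C > (0:ℝ), ∀ n : ℕ, dist (f^[n] x) p ≤ C * lam ^ n})
    (α : ℝ) (hα0 : 0 < α) (hα1 : α ≤ 1) (K : ℝ) (hK : 0 < K)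
    (η φ : M → EuclideanSpace ℝ (Fin d) → A)
    (Dη : M → EuclideanSpace ℝ (Fin d) → EuclideanSpace ℝ (Fin d) →L[ℝ] A)
    (hφ : ∀ z : M, ∀ u ∈ U,
      IsUnit (φ z u) ∧ ‖φ z u‖ ≤ K ∧ ‖Ring.inverse (φ z u)‖ ≤ K)
    (hφcont : ContinuousOn (fun q : M × EuclideanSpace ℝ (Fin d) => φ q.1 q.2)
      (Set.univ ×ˢ U))
    (hcoh : ∀ z : M, ∀ u ∈ U, φ (f z) u = η z u * φ z u)
    (hdη : ∀ z : M, ∀ u ∈ U, HasFDerivAt (η z) (Dη z u) u ∧ ‖Dη z u‖ ≤ K)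
    (hDηcont : ContinuousOn (fun q : M × EuclideanSpace ℝ (Fin d) => Dη q.1 q.2)
      (Set.univ ×ˢ U))
    (hHolη : ∀ z z' : M, ∀ u ∈ U, ‖η z u - η z' u‖ ≤ K * dist z z' ^ α)
    (hHolDη : ∀ z z' : M, ∀ u ∈ U, ‖Dη z u - Dη z' u‖ ≤ K * dist z z' ^ α)
    (hHolφ : ∀ z z' : M, ∀ u ∈ U, ‖φ z u - φ z' u‖ ≤ K * dist z z' ^ α)
    (γ' : EuclideanSpace ℝ (Fin d) → EuclideanSpace ℝ (Fin d) →L[ℝ] A)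
    (hγ : ∀ u ∈ U, HasFDerivAt (φ p) (γ' u) u)
    (ξ : M → EuclideanSpace ℝ (Fin d) → EuclideanSpace ℝ (Fin d) →L[ℝ] A)
    (hξcont : ContinuousOn (fun q : M × EuclideanSpace ℝ (Fin d) => ξ q.1 q.2)
      (Set.univ ×ˢ U))
    (hξcoh : ∀ z : M, ∀ u ∈ U, ∀ v : EuclideanSpace ℝ (Fin d),
      ξ (f z) u v = ξ z u v + Ring.inverse (φ (f z) u) * (Dη z u v) * φ z u)
    (hξnorm : ∀ u ∈ U, ∀ v : EuclideanSpace ℝ (Fin d),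
      ξ p u v = Ring.inverse (φ p u) * (γ' u v)) :
    ∀ z : M, ∀ u ∈ U, ∃ D : EuclideanSpace ℝ (Fin d) →L[ℝ] A,
      HasFDerivAt (fun w => φ z w) D u ∧ ∀ v, D v = φ z u * (ξ z u v) :=
  stmt_10_general U hU f p lam hlam0 hlam1 hdense K η φ Dη hφ hφcont hcoh hdη γ' hγ ξ hξcont hξcoh
    hξnorm
end

section
/- Let G be a Lie group with identity e and Lie algebra 𝔤 = T_e G, F a normed space, U ⊆ F open, and a, b, c : U → G maps differentiable at u ∈ U with c(w) = b(w) * a(w) for all w ∈ U. Define ξ_a(u) := (D L_{a(u)}(e))⁻¹ ∘ Da(u) : F → 𝔤 and ξ_c(u) := (D L_{c(u)}(e))⁻¹ ∘ Dc(u) : F → 𝔤. Then for every v ∈ F: ξ_c(u) v = ξ_a(u) v + ( D L_{c(u)⁻¹}(c(u)) ∘ D R_{a(u)}(b(u)) ∘ Db(u) ) v. -/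
open scoped Manifold

/-! Differentiating `c = b * a` by the Leibniz rule in `G` gives
`Dc = DR_{a}(b) ∘ Db + DL_{b}(a) ∘ Da`. Applying `DL_{c⁻¹}(c)` and using the chain rule for
`L_{c⁻¹} ∘ L_b = L_{a⁻¹}` turns the second term into `ξ_a`. -/

section

variable {𝕜 : Type*} [NontriviallyNormedField 𝕜]
  {E : Type*} [NormedAddCommGroup E] [NormedSpace 𝕜 E] {H : Type*} [TopologicalSpace H]
  {I : ModelWithCorners 𝕜 E H} {G : Type*} [TopologicalSpace G] [ChartedSpace H G] [Monoid G]
  [ContMDiffMul I 1 G]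
  {E' : Type*} [NormedAddCommGroup E'] [NormedSpace 𝕜 E'] {H' : Type*} [TopologicalSpace H']
  {I' : ModelWithCorners 𝕜 E' H'} {M : Type*} [TopologicalSpace M] [ChartedSpace H' M]

theorem mfderiv_mul_apply {f g : M → G} {x : M} (hf : MDifferentiableAt I' I f x)
    (hg : MDifferentiableAt I' I g x) (v : TangentSpace I' x) :
    mfderiv I' I (fun y => f y * g y) x v =
      mfderiv I I (· * g x) (f x) (mfderiv I' I f x v) +
        mfderiv I I (f x * ·) (g x) (mfderiv I' I g x v) := by
  have hmul : MDifferentiableAt (I.prod I) I (fun p : G × G => p.1 * p.2) (f x, g x) :=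
    ((contMDiff_mul I 1).mdifferentiable one_ne_zero) _
  rw [show (fun y => f y * g y) = (fun p : G × G => p.1 * p.2) ∘ fun y => (f y, g y) from rfl,
    mfderiv_comp_apply x hmul (hf.prodMk hg), hf.mfderiv_prod hg]
  exact mfderiv_prod_eq_add_apply hmul

theorem mfderiv_mul_left_comp_mul_left (g h x : G) (v : TangentSpace I x) :
    mfderiv I I (g * ·) (h * x) (mfderiv I I (h * ·) x v) = mfderiv I I (g * h * ·) x v := by
  rw [← mfderiv_comp_apply x mdifferentiableAt_mul_left mdifferentiableAt_mul_left,
    show (g * ·) ∘ (h * ·) = (g * h * ·) from funext fun y => (mul_assoc g h y).symm]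

end

theorem stmt_13_general {E : Type*} [NormedAddCommGroup E] [NormedSpace ℝ E]
    {H : Type*} [TopologicalSpace H] (I : ModelWithCorners ℝ E H)
    (G : Type*) [TopologicalSpace G] [ChartedSpace H G] [Group G]
    [LieGroup I (⊤ : ℕ∞) G]
    {F : Type*} [NormedAddCommGroup F] [NormedSpace ℝ F]
    (U : Set F) (hU : IsOpen U) (u : F) (hu : u ∈ U)
    (a b c : F → G)
    (hda : MDifferentiableAt 𝓘(ℝ, F) I a u)
    (hdb : MDifferentiableAt 𝓘(ℝ, F) I b u)
    (hcoh : ∀ w ∈ U, c w = b w * a w) :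
    ∀ v : F,
      @id (TangentSpace I (1 : G))
        (mfderiv I I (fun y => (c u)⁻¹ * y) (c u) (mfderiv 𝓘(ℝ, F) I c u v)) =
      @id (TangentSpace I (1 : G))
        (mfderiv I I (fun y => (a u)⁻¹ * y) (a u) (mfderiv 𝓘(ℝ, F) I a u v)) +
      @id (TangentSpace I (1 : G))
        (mfderiv I I (fun y => (c u)⁻¹ * y) (c u)
          ((mfderiv I I (fun y => y * a u) (b u)) (mfderiv 𝓘(ℝ, F) I b u v))) := by
  intro v
  have hc : c =ᶠ[nhds u] fun w => b w * a w := Filter.eventuallyEq_of_mem (hU.mem_nhds hu) hcoh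
  dsimp only [id]
  rw [hc.mfderiv_eq, hcoh u hu, mfderiv_mul_apply hdb hda v, map_add, add_comm,
    mfderiv_mul_left_comp_mul_left, show (b u * a u)⁻¹ * b u = (a u)⁻¹ by group]
  -- the two sums are taken in `TangentSpace I (b u * a u)` and `TangentSpace I 1`, both `E`
  rfl

/-- If `c = b * a` on `U` with `a, b, c : U → G` differentiable at `u ∈ U`, then the
Lie-algebra valued logarithmic derivatives `ξ_a(u) = (DL_{a(u)}(e))⁻¹ ∘ Da(u)
= DL_{a(u)⁻¹}(a(u)) ∘ Da(u)` satisfy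
`ξ_c(u) v = ξ_a(u) v + (DL_{c(u)⁻¹}(c(u)) ∘ DR_{a(u)}(b(u)) ∘ Db(u)) v` in `𝔤 = T_e G`. -/
theorem stmt_13 {E : Type*} [NormedAddCommGroup E] [NormedSpace ℝ E]
    {H : Type*} [TopologicalSpace H] (I : ModelWithCorners ℝ E H)
    (G : Type*) [TopologicalSpace G] [ChartedSpace H G] [Group G]
    [IsManifold I (⊤ : ℕ∞) G] [LieGroup I (⊤ : ℕ∞) G]
    {F : Type*} [NormedAddCommGroup F] [NormedSpace ℝ F]
    (U : Set F) (hU : IsOpen U) (u : F) (hu : u ∈ U)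
    (a b c : F → G)
    (hda : MDifferentiableAt 𝓘(ℝ, F) I a u)
    (hdb : MDifferentiableAt 𝓘(ℝ, F) I b u)
    (hdc : MDifferentiableAt 𝓘(ℝ, F) I c u)
    (hcoh : ∀ w ∈ U, c w = b w * a w) :
    ∀ v : F,
      @id (TangentSpace I (1 : G))
        (mfderiv I I (fun y => (c u)⁻¹ * y) (c u) (mfderiv 𝓘(ℝ, F) I c u v)) =
      @id (TangentSpace I (1 : G))
        (mfderiv I I (fun y => (a u)⁻¹ * y) (a u) (mfderiv 𝓘(ℝ, F) I a u v)) +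
      @id (TangentSpace I (1 : G))
        (mfderiv I I (fun y => (c u)⁻¹ * y) (c u)
          ((mfderiv I I (fun y => y * a u) (b u)) (mfderiv 𝓘(ℝ, F) I b u v))) :=
  stmt_13_general I G U hU u hu a b c hda hdb hcoh
end
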